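/- For every integer r ≥ 1 one has the identity of formal power series in ℤ[[u]]: (1 - u)·P_{2r+1}(1,u) = u²·P_{2r-2}(1,u), where P_m(1,u) is obtained from P_m(q,u) by evaluating each coefficient at q = 1. -/

import Mathlib

open scoped PowerSeries

/-- The polynomials `p_{s,r}(q) ∈ ℤ[q]` (the graded multiplicities
`[D(2,sω) : D(3,rω)]_q`): `p_{0,0} = p_{1,1} = p_{2,2} = 1`; `p_{s,r} = 0` whenever
`r > s`, or `s - r` is odd, or `s ≤ 2` and `(s,r) ∉ {(0,0),(1,1),(2,2)}`; and for
`s ≥ 3` with `r ≤ s` and `s - r` even, writing `s = 2s₁ + s₀` with `s₀ ∈ {0,1}`,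
`p_{s,r} = q^{(s-r)/2} p_{s-3,r-3} + q^{(s₁+s₀-1)(2-s₀)} p_{s-4+2s₀,r}` if `r ≥ 3`, and
`p_{s,r} = q^{(s₁+s₀-1)(2-s₀)} p_{s-4+2s₀,r}` if `0 ≤ r ≤ 2`. -/
noncomputable def pp : ℕ → ℕ → Polynomial ℤ
  | 0, r => if r = 0 then 1 else 0
  | 1, r => if r = 1 then 1 else 0
  | 2, r => if r = 2 then 1 else 0
  | (s + 3), r =>
    if (s + 3) < r ∨ (s + 3) % 2 ≠ r % 2 then 0
    else
      (if 3 ≤ r then Polynomial.X ^ (((s + 3) - r) / 2) * pp s (r - 3) else 0)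
        + Polynomial.X ^ (((s + 3) / 2 + (s + 3) % 2 - 1) * (2 - (s + 3) % 2))
            * pp ((s + 3) + 2 * ((s + 3) % 2) - 4) r
  termination_by s _ => s
  decreasing_by
  · omega
  · omega

/-- The generating series `P_m(q,u)`: for `m` even, `P_m(q,u) = Σ_{s≥0} p_{2s,m} u^s`;
for `m` odd, `P_m(q,u) = Σ_{s≥0} p_{2s+1,m} u^{s+1}`.  A formal power series in `u` with
coefficients in `ℤ[q]`. -/
noncomputable def Pser (m : ℕ) : PowerSeries (Polynomial ℤ) :=
  PowerSeries.mk fun n =>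
    if m % 2 = 0 then pp (2 * n) m else if n = 0 then 0 else pp (2 * n - 1) m

/-- `thetaSubst a c` is the substituted partial theta series `Θ(a, c·u²) ∈ ℤ[q]⟦u⟧`,
i.e. `Σ_{s≥0} a^{s²} c^s u^{2s}`, where `Θ(q,u) = Σ_{s≥0} q^{s²}u^s`. -/
noncomputable def thetaSubst (a c : Polynomial ℤ) : PowerSeries (Polynomial ℤ) :=
  PowerSeries.mk fun n => if n % 2 = 0 then a ^ ((n / 2) ^ 2) * c ^ (n / 2) else 0

/-- `P_m(1,u) ∈ ℤ⟦u⟧`, obtained from `P_m(q,u)` by evaluating each coefficient at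
`q = 1`. -/
noncomputable def Pone (m : ℕ) : PowerSeries ℤ :=
  PowerSeries.map (Polynomial.evalRingHom (1 : ℤ)) (Pser m)

/-! At `q = 1` the recurrence for `p_{2n+3, 2r+1}` (with `2r + 1 ≥ 3`) reads
`p_{2n+3,2r+1} = p_{2n,2r-2} + p_{2n+1,2r+1}`, which is exactly the coefficient of `u^{n+2}`
in the claimed identity; the lower coefficients vanish since `p_{s,r} = 0` for `s < r`. -/

theorem pp_eq_zero_of_lt {s r : ℕ} (h : s < r) : pp s r = 0 := by
  match s with
  | 0 => rw [pp, if_neg (by omega)]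
  | 1 => rw [pp, if_neg (by omega)]
  | 2 => rw [pp, if_neg (by omega)]
  | s + 3 => rw [pp, if_pos (Or.inl h)]

theorem pp_two_mul_add_three_two_mul_add_one (n : ℕ) {r : ℕ} (hr : 1 ≤ r) :
    pp (2 * n + 3) (2 * r + 1) =
      Polynomial.X ^ (n + 1 - r) * pp (2 * n) (2 * r - 2)
        + Polynomial.X ^ (n + 1) * pp (2 * n + 1) (2 * r + 1) := by
  by_cases h : 2 * n + 3 < 2 * r + 1
  · rw [pp_eq_zero_of_lt h, pp_eq_zero_of_lt (by omega : 2 * n < 2 * r - 2),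
      pp_eq_zero_of_lt (by omega : 2 * n + 1 < 2 * r + 1)]
    simp
  · rw [pp, if_neg (by omega), if_pos (by omega)]
    have hpar : (2 * n + 3) % 2 = 1 := by omega
    rw [hpar, show 2 * n + 3 + 2 * 1 - 4 = 2 * n + 1 by omega,
      show 2 * r + 1 - 3 = 2 * r - 2 by omega, show (2 * n + 3) / 2 + 1 - 1 = n + 1 by omega,
      show (2 * n + 3 - (2 * r + 1)) / 2 = n + 1 - r by omega]
    simp

theorem coeff_Pone_of_even {m : ℕ} (hm : m % 2 = 0) (n : ℕ) :
    PowerSeries.coeff n (Pone m) = (pp (2 * n) m).eval 1 := by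
  simp [Pone, Pser, hm]

theorem coeff_Pone_of_odd {m : ℕ} (hm : m % 2 = 1) (n : ℕ) :
    PowerSeries.coeff (n + 1) (Pone m) = (pp (2 * n + 1) m).eval 1 := by
  simp [Pone, Pser, hm, show 2 * (n + 1) - 1 = 2 * n + 1 by omega]

theorem constantCoeff_Pone_of_odd {m : ℕ} (hm : m % 2 = 1) :
    PowerSeries.constantCoeff (Pone m) = 0 := by
  simp [Pone, Pser, hm, ← PowerSeries.coeff_zero_eq_constantCoeff]

/-- For every integer `r ≥ 1`, in `ℤ⟦u⟧`:
`(1 - u)·P_{2r+1}(1,u) = u²·P_{2r-2}(1,u)`. -/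
theorem stmt16 (r : ℕ) (hr : 1 ≤ r) :
    (1 - PowerSeries.X) * Pone (2 * r + 1) = PowerSeries.X ^ 2 * Pone (2 * r - 2) := by
  have hodd : (2 * r + 1) % 2 = 1 := by omega
  have heven : (2 * r - 2) % 2 = 0 := by omega
  ext n
  rw [sub_mul, one_mul, map_sub, pow_two, mul_assoc]
  rcases n with _ | _ | n
  · simp [constantCoeff_Pone_of_odd hodd]
  · rw [PowerSeries.coeff_succ_X_mul, PowerSeries.coeff_succ_X_mul, PowerSeries.coeff_zero_X_mul,
      coeff_Pone_of_odd hodd, pp_eq_zero_of_lt (by omega)]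
    simp [constantCoeff_Pone_of_odd hodd]
  · rw [PowerSeries.coeff_succ_X_mul, PowerSeries.coeff_succ_X_mul, PowerSeries.coeff_succ_X_mul,
      coeff_Pone_of_odd hodd, coeff_Pone_of_odd hodd, coeff_Pone_of_even heven,
      show 2 * (n + 1) + 1 = 2 * n + 3 by omega, pp_two_mul_add_three_two_mul_add_one n hr]
    simp
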